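/- For a tuple M = (M_1,…,M_{n−1}) of linear maps M_i : V_i → V_{i+1}, and for 1 ≤ i ≤ j ≤ n, write M_{[i,j]} := M_{j−1} ∘ … ∘ M_i : V_i → V_j (with M_{[i,i]} = id). Let g_M ∈ GL(V) be the block lower triangular linear automorphism of V = V_1 ⊕ … ⊕ V_n whose (j,i)-block is M_{[i,j]} for j ≥ i and 0 for j < i. Then the assignment M ↦ (g_M(E_1),…,g_M(E_n)) is a bijection from the set ∏_{i=1}^{n−1} Hom_k(V_i,V_{i+1}) of all such tuples M onto the set of flags F_1 ⊆ F_2 ⊆ … ⊆ F_n = V of subspaces of V with dim F_i = α_1 + … + α_i for all i, E_{i−1} ⊆ F_i for i = 2,…,n, and F_i ∩ E'_i = 0 for i = 1,…,n. (This is the Zelevinsky map for the linearly oriented quiver of type A_n.) -/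
import Mathlib


open Module

section

variable {k : Type} [Field k] {n : ℕ} (W : Fin n → Type)
  [∀ i, AddCommGroup (W i)] [∀ i, Module k (W i)]

/-- The subspace `E_m = V_1 ⊕ … ⊕ V_m` of `V = V_1 ⊕ … ⊕ V_n`
(0-based: the coordinates `< m`). -/
def Efl (m : ℕ) : Submodule k (∀ j, W j) where
  carrier := {f | ∀ j : Fin n, m ≤ (j : ℕ) → f j = 0}
  add_mem' := by
    intro f g hf hg j hj
    simp [Pi.add_apply, hf j hj, hg j hj]
  zero_mem' := by intro j hj; rfl
  smul_mem' := by
    intro c f hf j hj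
    simp [Pi.smul_apply, hf j hj]

/-- The subspace `E'_m = V_{m+1} ⊕ … ⊕ V_n` of `V` (0-based: the coordinates `≥ m`). -/
def Tl (m : ℕ) : Submodule k (∀ j, W j) where
  carrier := {f | ∀ j : Fin n, (j : ℕ) < m → f j = 0}
  add_mem' := by
    intro f g hf hg j hj
    simp [Pi.add_apply, hf j hj, hg j hj]
  zero_mem' := by intro j hj; rfl
  smul_mem' := by
    intro c f hf j hj
    simp [Pi.smul_apply, hf j hj]

/-- The block sub-diagonal endomorphism of `V = V_1 ⊕ … ⊕ V_n` determined by a tuple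
`M = (M_1,…,M_{n−1})` of maps `M_i : V_i → V_{i+1}`: its `(i+1,i)`-blocks are the `M_i`
and all other blocks are `0`. -/
def Dmat (M : ∀ i j : Fin n, (i : ℕ) + 1 = (j : ℕ) → (W i →ₗ[k] W j)) :
    (∀ j, W j) →ₗ[k] (∀ j, W j) :=
  LinearMap.pi (fun j : Fin n =>
    ∑ i : Fin n,
      if h : (i : ℕ) + 1 = (j : ℕ) then (M i j h).comp (LinearMap.proj i) else 0)

/-- The Zelevinsky matrix `g_M = Σ_r (D_M)^r`: the block lower triangular automorphism of
`V = V_1 ⊕ … ⊕ V_n` whose `(j,i)`-block is `M_{[i,j]} = M_{j−1} ∘ … ∘ M_i` for `j ≥ i`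
(and `0` for `j < i`). -/
noncomputable def gMat (M : ∀ i j : Fin n, (i : ℕ) + 1 = (j : ℕ) → (W i →ₗ[k] W j)) :
    (∀ j, W j) →ₗ[k] (∀ j, W j) :=
  ∑ r ∈ Finset.range n, (Dmat W M) ^ r

end

section

variable {k : Type} [Field k] {n : ℕ} {W : Fin n → Type}
  [∀ i, AddCommGroup (W i)] [∀ i, Module k (W i)]

open Module


variable (M : ∀ i j : Fin n, (i : ℕ) + 1 = (j : ℕ) → (W i →ₗ[k] W j))

lemma mem_Efl {f : ∀ j, W j} {m : ℕ} : f ∈ Efl (k := k) W m ↔ ∀ j : Fin n, m ≤ (j : ℕ) → f j = 0 :=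
  Iff.rfl

lemma mem_Tl {f : ∀ j, W j} {m : ℕ} : f ∈ Tl (k := k) W m ↔ ∀ j : Fin n, (j : ℕ) < m → f j = 0 :=
  Iff.rfl

lemma Efl_mono {m m' : ℕ} (h : m ≤ m') : Efl (k := k) W m ≤ Efl (k := k) W m' := by
  intro f hf j hj
  exact hf j (le_trans h hj)

lemma Tl_anti {m m' : ℕ} (h : m ≤ m') : Tl (k := k) W m' ≤ Tl (k := k) W m := by
  intro f hf j hj
  exact hf j (lt_of_lt_of_le hj h)

lemma Efl_top {m : ℕ} (h : n ≤ m) : Efl (k := k) W m = ⊤ := by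
  ext f
  simp only [Submodule.mem_top, iff_true, mem_Efl]
  intro j hj
  exact absurd (lt_of_lt_of_le j.isLt h) (not_lt.2 hj)

lemma Efl_zero : Efl (k := k) W 0 = ⊥ := by
  ext f
  simp only [Submodule.mem_bot, mem_Efl]
  constructor
  · intro h; funext j; exact h j (Nat.zero_le _)
  · rintro rfl j _; rfl

lemma Tl_bot {m : ℕ} (h : n ≤ m) : Tl (k := k) W m = ⊥ := by
  ext f
  simp only [Submodule.mem_bot, mem_Tl]
  constructor
  · intro hf; funext j; exact hf j (lt_of_lt_of_le j.isLt h)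
  · rintro rfl j _; rfl

lemma Dmat_apply_succ (f : ∀ j, W j) {i j : Fin n} (h : (i : ℕ) + 1 = (j : ℕ)) :
    Dmat W M f j = M i j h (f i) := by
  show (∑ i' : Fin n, if h' : (i' : ℕ) + 1 = (j : ℕ)
      then (M i' j h').comp (LinearMap.proj i') else 0) f = _
  rw [LinearMap.sum_apply]
  rw [Finset.sum_eq_single i]
  · rw [dif_pos h]; rfl
  · intro i' _ hne
    rcases Decidable.em ((i' : ℕ) + 1 = (j : ℕ)) with h' | h'
    · exact absurd (Fin.ext (by omega : (i' : ℕ) = (i : ℕ))) hne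
    · rw [dif_neg h']; rfl
  · intro hmem; exact absurd (Finset.mem_univ i) hmem

lemma Dmat_apply_zero (f : ∀ j, W j) {j : Fin n} (h : (j : ℕ) = 0) :
    Dmat W M f j = 0 := by
  show (∑ i' : Fin n, if h' : (i' : ℕ) + 1 = (j : ℕ)
      then (M i' j h').comp (LinearMap.proj i') else 0) f = _
  rw [LinearMap.sum_apply]
  apply Finset.sum_eq_zero
  intro i' _
  rw [dif_neg (by omega)]
  rfl

lemma Dmat_mem_Tl {f : ∀ j, W j} {m : ℕ} (hf : f ∈ Tl (k := k) W m) :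
    Dmat W M f ∈ Tl (k := k) W (m + 1) := by
  intro j hj
  rcases Nat.eq_zero_or_pos (j : ℕ) with h0 | h0
  · exact Dmat_apply_zero M f h0
  · have hlt : (j : ℕ) - 1 < n := by omega
    have h : (((⟨(j : ℕ) - 1, hlt⟩ : Fin n) : ℕ) + 1 = (j : ℕ)) := by simp; omega
    rw [Dmat_apply_succ M f h, hf _ (by simp; omega), map_zero]

lemma pow_Dmat_mem_Tl (r : ℕ) (f : ∀ j, W j) : ((Dmat W M) ^ r) f ∈ Tl (k := k) W r := by
  induction r with
  | zero => intro j hj; omega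
  | succ r ih =>
    rw [pow_succ', Module.End.mul_apply]
    exact Dmat_mem_Tl M ih

lemma pow_Dmat_n : (Dmat W M) ^ n = 0 := by
  refine LinearMap.ext fun f => ?_
  have := pow_Dmat_mem_Tl M n f
  rw [Tl_bot le_rfl] at this
  simpa using this

lemma gMat_mul : gMat W M * (1 - Dmat W M) = 1 := by
  have h := geom_sum_mul (Dmat W M) n
  rw [pow_Dmat_n, zero_sub] at h
  have h1 : gMat W M * (Dmat W M - 1) = -1 := h
  calc gMat W M * (1 - Dmat W M) = -(gMat W M * (Dmat W M - 1)) := by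
        rw [mul_sub, mul_sub, neg_sub]
    _ = 1 := by rw [h1, neg_neg]

lemma mul_gMat : (1 - Dmat W M) * gMat W M = 1 := by
  have h := mul_geom_sum (Dmat W M) n
  rw [pow_Dmat_n, zero_sub] at h
  have h1 : (Dmat W M - 1) * gMat W M = -1 := h
  calc (1 - Dmat W M) * gMat W M = -((Dmat W M - 1) * gMat W M) := by
        rw [sub_mul, sub_mul, neg_sub]
    _ = 1 := by rw [h1, neg_neg]

lemma gMat_apply_sub (f : ∀ j, W j) : gMat W M (f - Dmat W M f) = f := by
  have := gMat_mul M
  have h := DFunLike.congr_fun this f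
  simpa [Module.End.mul_apply, LinearMap.sub_apply] using h

lemma sub_gMat_apply (f : ∀ j, W j) : gMat W M f - Dmat W M (gMat W M f) = f := by
  have := mul_gMat M
  have h := DFunLike.congr_fun this f
  simpa [Module.End.mul_apply, LinearMap.sub_apply] using h

noncomputable def gEquiv : (∀ j, W j) ≃ₗ[k] (∀ j, W j) :=
  LinearEquiv.ofLinear (gMat W M) (1 - Dmat W M)
    (by rw [← Module.End.mul_eq_comp, gMat_mul]; rfl)
    (by rw [← Module.End.mul_eq_comp, mul_gMat]; rfl)

lemma gEquiv_coe : (gEquiv M : (∀ j, W j) →ₗ[k] (∀ j, W j)) = gMat W M := rfl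

lemma gMat_mem_Tl {f : ∀ j, W j} {m : ℕ} (hf : f ∈ Tl (k := k) W m) : gMat W M f ∈ Tl (k := k) W m := by
  have hD : ∀ r : ℕ, ((Dmat W M) ^ r) f ∈ Tl (k := k) W m := by
    intro r
    induction r with
    | zero => exact hf
    | succ r ih =>
      rw [pow_succ', Module.End.mul_apply]
      exact Tl_anti (Nat.le_succ m) (Dmat_mem_Tl M ih)
  show (∑ r ∈ Finset.range n, (Dmat W M) ^ r) f ∈ Tl (k := k) W m
  rw [LinearMap.sum_apply]
  exact Submodule.sum_mem _ fun r _ => hD r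

lemma gMat_sub_self_mem {f : ∀ j, W j} {m : ℕ} (hf : f ∈ Tl (k := k) W m) :
    gMat W M f - f ∈ Tl (k := k) W (m + 1) := by
  have h := sub_gMat_apply M f
  have heq : gMat W M f - f = Dmat W M (gMat W M f) := by
    rw [sub_eq_iff_eq_add, add_comm]
    exact sub_eq_iff_eq_add.mp h
  rw [heq]
  exact Dmat_mem_Tl M (gMat_mem_Tl M hf)

lemma single_mem_Efl (i : Fin n) (v : W i) :
    Pi.single i v ∈ Efl (k := k) W ((i : ℕ) + 1) := by
  intro j hj
  exact Pi.single_eq_of_ne (fun h => by subst h; omega) v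

lemma single_mem_Tl (i : Fin n) (v : W i) : Pi.single i v ∈ Tl (k := k) W (i : ℕ) := by
  intro j hj
  exact Pi.single_eq_of_ne (fun h => by subst h; omega) v

noncomputable def eflEquiv (m : ℕ) :
    Efl (k := k) W m ≃ₗ[k] (∀ j : {j : Fin n // (j : ℕ) < m}, W j) where
  toFun f := fun j => f.1 j.1
  map_add' f g := rfl
  map_smul' c f := rfl
  invFun g := ⟨fun j => if h : (j : ℕ) < m then g ⟨j, h⟩ else 0,
    fun j hj => dif_neg (by omega)⟩
  left_inv f := by
    apply Subtype.ext
    funext j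
    dsimp only
    split
    · rfl
    · exact (f.2 j (not_lt.1 (by assumption))).symm
  right_inv g := by
    funext j
    dsimp only
    rw [dif_pos j.2]

lemma finrank_Efl [∀ i, FiniteDimensional k (W i)] (m : ℕ) :
    finrank k (Efl (k := k) W m)
      = ∑ j ∈ Finset.univ.filter (fun j : Fin n => (j : ℕ) < m), finrank k (W j) := by
  rw [(eflEquiv (W := W) m).finrank_eq, Module.finrank_pi_fintype]
  exact (Finset.sum_subtype (Finset.univ.filter (fun j : Fin n => (j : ℕ) < m))
    (fun j => by simp) (fun j => finrank k (W j))).symm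

end

section
open Module
variable {k : Type} [Field k] {n : ℕ} {W : Fin n → Type}
  [∀ i, AddCommGroup (W i)] [∀ i, Module k (W i)]

/-- Truncation: keep coordinates `< m`, zero out the rest. -/
def pproj (m : ℕ) : (∀ j, W j) →ₗ[k] (∀ j, W j) where
  toFun f := fun j => if (j : ℕ) < m then f j else 0
  map_add' f g := by funext j; by_cases h : (j : ℕ) < m <;> simp [h]
  map_smul' c f := by funext j; by_cases h : (j : ℕ) < m <;> simp [h]

lemma pproj_apply_lt {m : ℕ} (f : ∀ j, W j) {j : Fin n} (h : (j : ℕ) < m) :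
    pproj (k := k) m f j = f j := if_pos h

lemma pproj_apply_ge {m : ℕ} (f : ∀ j, W j) {j : Fin n} (h : m ≤ (j : ℕ)) :
    pproj (k := k) m f j = 0 := if_neg (not_lt.2 h)

lemma pproj_mem_Efl (m : ℕ) (f : ∀ j, W j) : pproj (k := k) m f ∈ Efl (k := k) W m :=
  fun j hj => pproj_apply_ge f hj

variable (F : Fin n → Submodule k (∀ j, W j))

/-- The truncation map `F i → E_{i+1}`. -/
def psiMap (i : Fin n) : F i →ₗ[k] Efl (k := k) W ((i : ℕ) + 1) :=
  LinearMap.codRestrict _ ((pproj ((i : ℕ) + 1)).comp (F i).subtype)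
    (fun x => pproj_mem_Efl _ _)

lemma psiMap_inj {i : Fin n} (h5 : F i ⊓ Tl (k := k) W ((i : ℕ) + 1) = ⊥) :
    Function.Injective (psiMap F i) := by
  rw [← LinearMap.ker_eq_bot, eq_bot_iff]
  rintro ⟨x, hxF⟩ hx
  have hx' : pproj (k := k) ((i : ℕ) + 1) x = 0 := congrArg Subtype.val hx
  have hxT : x ∈ Tl (k := k) W ((i : ℕ) + 1) := by
    intro j hj
    rw [← pproj_apply_lt (k := k) (m := (i : ℕ) + 1) x hj, hx']
    rfl
  have : x ∈ F i ⊓ Tl (k := k) W ((i : ℕ) + 1) := ⟨hxF, hxT⟩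
  rw [h5] at this
  simpa using this

variable [∀ i, FiniteDimensional k (W i)]

/-- The inverse of the truncation map, landing in `V`. -/
noncomputable def sigmaMap (i : Fin n) (hinj : Function.Injective (psiMap F i))
    (hd : finrank k (F i) = finrank k (Efl (k := k) W ((i : ℕ) + 1))) :
    Efl (k := k) W ((i : ℕ) + 1) →ₗ[k] (∀ j, W j) :=
  (F i).subtype.comp ((psiMap F i).linearEquivOfInjective hinj hd).symm.toLinearMap

lemma sigmaMap_uniq (i : Fin n) (hinj : Function.Injective (psiMap F i))
    (hd : finrank k (F i) = finrank k (Efl (k := k) W ((i : ℕ) + 1)))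
    (x : Efl (k := k) W ((i : ℕ) + 1)) (u : ∀ j, W j) (hu : u ∈ F i)
    (hp : pproj (k := k) ((i : ℕ) + 1) u = x.1) :
    sigmaMap F i hinj hd x = u := by
  have he : (psiMap F i).linearEquivOfInjective hinj hd ⟨u, hu⟩ = x := by
    apply Subtype.ext
    exact hp
  have := congrArg ((psiMap F i).linearEquivOfInjective hinj hd).symm he
  rw [LinearEquiv.symm_apply_apply] at this
  show (F i).subtype (((psiMap F i).linearEquivOfInjective hinj hd).symm x) = u
  rw [← this]
  rfl

lemma sigmaMap_mem (i : Fin n) (hinj : Function.Injective (psiMap F i))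
    (hd : finrank k (F i) = finrank k (Efl (k := k) W ((i : ℕ) + 1)))
    (x : Efl (k := k) W ((i : ℕ) + 1)) : sigmaMap F i hinj hd x ∈ F i :=
  (((psiMap F i).linearEquivOfInjective hinj hd).symm x).2

/-- `W i → E_{i+1}`, `v ↦ Pi.single i v`. -/
def singleEfl (i : Fin n) : W i →ₗ[k] Efl (k := k) W ((i : ℕ) + 1) :=
  LinearMap.codRestrict _ (LinearMap.single k W i) (fun v => single_mem_Efl i v)

/-- The tuple `M` associated to a flag `F`. -/
noncomputable def MF (hinj : ∀ i, Function.Injective (psiMap F i))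
    (hd : ∀ i, finrank k (F i) = finrank k (Efl (k := k) W ((i : ℕ) + 1))) :
    ∀ i j : Fin n, (i : ℕ) + 1 = (j : ℕ) → (W i →ₗ[k] W j) :=
  fun i j _ => (LinearMap.proj j).comp ((sigmaMap F i (hinj i) (hd i)).comp (singleEfl i))

lemma keyA (hinj : ∀ i, Function.Injective (psiMap F i))
    (hd : ∀ i, finrank k (F i) = finrank k (Efl (k := k) W ((i : ℕ) + 1)))
    (hE : ∀ l : Fin n, Efl (k := k) W (l : ℕ) ≤ F l)
    (l j' : Fin n) (h : (l : ℕ) + 1 = (j' : ℕ)) {w : ∀ j, W j} (hw : w ∈ F l) :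
    w j' = MF F hinj hd l j' h (w l) := by
  have hxF : pproj (k := k) (l : ℕ) w ∈ F l := hE l (pproj_mem_Efl _ _)
  have huF : w - pproj (k := k) (l : ℕ) w ∈ F l := sub_mem hw hxF
  have hp : pproj (k := k) ((l : ℕ) + 1) (w - pproj (k := k) (l : ℕ) w)
      = (singleEfl (k := k) l (w l)).1 := by
    show pproj (k := k) ((l : ℕ) + 1) (w - pproj (k := k) (l : ℕ) w) = Pi.single l (w l)
    funext j''
    by_cases hlt : (j'' : ℕ) < (l : ℕ) + 1
    · rw [pproj_apply_lt _ hlt]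
      rcases Nat.lt_or_ge (j'' : ℕ) (l : ℕ) with hlt' | hge'
      · have hne : j'' ≠ l := fun hh => by subst hh; omega
        rw [Pi.sub_apply, pproj_apply_lt _ hlt', sub_self, Pi.single_eq_of_ne hne]
      · have hjl : j'' = l := Fin.ext (by omega)
        subst hjl
        rw [Pi.sub_apply, pproj_apply_ge _ (le_refl _), sub_zero, Pi.single_eq_same]
    · have hne : j'' ≠ l := fun hh => by subst hh; omega
      rw [pproj_apply_ge _ (not_lt.1 hlt), Pi.single_eq_of_ne hne]
  have huniq := sigmaMap_uniq F l (hinj l) (hd l) (singleEfl (k := k) l (w l)) _ huF hp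
  have hM : MF F hinj hd l j' h (w l)
      = (sigmaMap F l (hinj l) (hd l) (singleEfl (k := k) l (w l))) j' := rfl
  rw [hM, huniq, Pi.sub_apply, pproj_apply_ge _ (by omega), sub_zero]

end

/-- The Zelevinsky map: `M ↦ (g_M(E_1),…,g_M(E_n))` is a bijection from the set of all
tuples `M = (M_1,…,M_{n−1})` of linear maps `M_i : V_i → V_{i+1}` onto the set of flags
`F_1 ⊆ … ⊆ F_n = V` with `dim F_i = α_1 + … + α_i`, `E_{i−1} ⊆ F_i` for `i = 2,…,n`, and
`F_i ∩ E'_i = 0` for `i = 1,…,n`. (Here everything is indexed 0-based.) -/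
theorem statement16 {k : Type} [Field k] {n : ℕ} (hn : 1 ≤ n) (W : Fin n → Type)
    [∀ i, AddCommGroup (W i)] [∀ i, Module k (W i)] [∀ i, FiniteDimensional k (W i)] :
    Set.BijOn
      (fun M : ∀ i j : Fin n, (i : ℕ) + 1 = (j : ℕ) → (W i →ₗ[k] W j) =>
        fun i : Fin n => Submodule.map (gMat W M) (Efl W ((i : ℕ) + 1)))
      Set.univ
      {F : Fin n → Submodule k (∀ j, W j) |
        (∀ i j : Fin n, i ≤ j → F i ≤ F j) ∧
        F ⟨n - 1, by omega⟩ = ⊤ ∧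
        (∀ i : Fin n,
          finrank k (F i) = ∑ j ∈ Finset.univ.filter (· ≤ i), finrank k (W j)) ∧
        (∀ i : Fin n, 1 ≤ (i : ℕ) → Efl W (i : ℕ) ≤ F i) ∧
        (∀ i : Fin n, F i ⊓ Tl W ((i : ℕ) + 1) = ⊥)} := by
  classical
  -- a helper used several times: the filter identity for ranks
  have hfilter : ∀ i : Fin n,
      (Finset.univ.filter (fun j : Fin n => (j : ℕ) < (i : ℕ) + 1))
        = Finset.univ.filter (· ≤ i) := by
    intro i
    ext j
    simp only [Finset.mem_filter, Finset.mem_univ, true_and, Fin.le_def,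
      Nat.lt_succ_iff]
  refine ⟨?_, ?_, ?_⟩
  · -- MapsTo
    intro M _
    refine ⟨?_, ?_, ?_, ?_, ?_⟩
    · intro i j hij
      exact Submodule.map_mono (Efl_mono (by
        have : (i : ℕ) ≤ (j : ℕ) := hij
        omega))
    · have htop : Efl (k := k) W (((⟨n - 1, by omega⟩ : Fin n) : ℕ) + 1) = ⊤ :=
        Efl_top (by show n ≤ n - 1 + 1; omega)
      show Submodule.map (gMat W M) (Efl W (((⟨n - 1, by omega⟩ : Fin n) : ℕ) + 1)) = ⊤
      rw [htop, Submodule.map_top, LinearMap.range_eq_top]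
      exact (gEquiv M).surjective
    · intro i
      show finrank k (Submodule.map (gMat W M) (Efl W ((i : ℕ) + 1))) = _
      rw [← gEquiv_coe M, LinearEquiv.finrank_map_eq, finrank_Efl, hfilter]
    · intro i _
      intro x hx
      refine ⟨x - Dmat W M x, ?_, gMat_apply_sub M x⟩
      intro j hj
      have hx1 : x j = 0 := hx j (by omega)
      have hD : Dmat W M x j = 0 := by
        have hlt : (j : ℕ) - 1 < n := by omega
        have h : (((⟨(j : ℕ) - 1, hlt⟩ : Fin n) : ℕ) + 1 = (j : ℕ)) := by simp; omega
        rw [Dmat_apply_succ M x h, hx _ (by simp; omega), map_zero]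
      rw [Pi.sub_apply, hx1, hD, sub_zero]
    · intro i
      rw [eq_bot_iff]
      rintro x ⟨⟨y, hy, rfl⟩, hxT⟩
      show gMat W M y ∈ (⊥ : Submodule k (∀ j, W j))
      have hy' : y = gMat W M y - Dmat W M (gMat W M y) := (sub_gMat_apply M y).symm
      have hy0 : y = 0 := by
        funext j
        rw [Pi.zero_apply]
        rcases Nat.lt_or_ge (j : ℕ) ((i : ℕ) + 1) with hj | hj
        · rw [hy']
          have h1 : gMat W M y j = 0 := hxT j hj
          have h2 : Dmat W M (gMat W M y) j = 0 := by
            rcases Nat.eq_zero_or_pos (j : ℕ) with h0 | h0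
            · exact Dmat_apply_zero M _ h0
            · have hlt : (j : ℕ) - 1 < n := by omega
              have h : (((⟨(j : ℕ) - 1, hlt⟩ : Fin n) : ℕ) + 1 = (j : ℕ)) := by simp; omega
              rw [Dmat_apply_succ M _ h, hxT _ (by simp; omega), map_zero]
          rw [Pi.sub_apply, h1, h2, sub_zero]
        · exact hy j hj
      simp [hy0]
  · -- InjOn
    intro M _ M' _ heq
    funext i j h
    apply LinearMap.ext
    intro v
    have heq' : Submodule.map (gMat W M) (Efl W ((i : ℕ) + 1))
        = Submodule.map (gMat W M') (Efl W ((i : ℕ) + 1)) := congrFun heq i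
    have hw : gMat W M (Pi.single i v) ∈ Submodule.map (gMat W M') (Efl W ((i : ℕ) + 1)) := by
      rw [← heq']
      exact ⟨Pi.single i v, single_mem_Efl i v, rfl⟩
    obtain ⟨x, hx, hgx⟩ := hw
    set w := gMat W M (Pi.single i v) with hwdef
    have hsub := gMat_sub_self_mem M (single_mem_Tl i v)
    have hwi : w i = v := by
      have h0 := hsub i (by omega)
      rw [Pi.sub_apply, Pi.single_eq_same, sub_eq_zero] at h0
      exact h0
    have hwj_M : w j = M i j h v := by
      have h1 := sub_gMat_apply M (Pi.single i v)
      have h2 : w j - Dmat W M w j = Pi.single i v j := by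
        rw [← Pi.sub_apply, h1]
      rw [Pi.single_eq_of_ne (fun hh => by subst hh; omega) v] at h2
      rw [Dmat_apply_succ M w h, hwi] at h2
      exact sub_eq_zero.1 h2
    have hwj_M' : w j = M' i j h v := by
      have h1 : x = w - Dmat W M' w := by rw [← hgx]; exact (sub_gMat_apply M' x).symm
      have h2 : x j = 0 := hx j (by omega)
      rw [h1, Pi.sub_apply, Dmat_apply_succ M' w h, hwi, sub_eq_zero] at h2
      exact h2
    rw [← hwj_M, hwj_M']
  · -- SurjOn
    rintro F ⟨h1, h2, h3, h4, h5⟩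
    have hE : ∀ l : Fin n, Efl (k := k) W (l : ℕ) ≤ F l := by
      intro l
      rcases Nat.eq_zero_or_pos (l : ℕ) with h0 | h0
      · rw [h0, Efl_zero]; exact bot_le
      · exact h4 l h0
    have hd : ∀ i : Fin n, finrank k (F i) = finrank k (Efl (k := k) W ((i : ℕ) + 1)) := by
      intro i
      rw [h3 i, finrank_Efl, hfilter]
    have hinj : ∀ i : Fin n, Function.Injective (psiMap F i) := fun i => psiMap_inj F (h5 i)
    set M := MF F hinj hd with hM
    refine ⟨M, Set.mem_univ M, ?_⟩
    show (fun i : Fin n => Submodule.map (gMat W M) (Efl W ((i : ℕ) + 1))) = F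
    funext i
    show Submodule.map (gMat W M) (Efl W ((i : ℕ) + 1)) = F i
    have hle : F i ≤ Submodule.map (gMat W M) (Efl W ((i : ℕ) + 1)) := by
      intro w hw
      refine ⟨w - Dmat W M w, ?_, gMat_apply_sub M w⟩
      intro j hj
      have hlt : (j : ℕ) - 1 < n := by omega
      set l : Fin n := ⟨(j : ℕ) - 1, hlt⟩ with hl
      have h : ((l : ℕ) + 1 = (j : ℕ)) := by simp [hl]; omega
      have hwl : w ∈ F l := h1 i l (by show (i : ℕ) ≤ (l : ℕ); simp [hl]; omega) hw
      have := keyA F hinj hd hE l j h hwl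
      rw [Pi.sub_apply, Dmat_apply_succ M w h, ← this, sub_self]
    have hrank : finrank k (Submodule.map (gMat W M) (Efl (k := k) W ((i : ℕ) + 1)))
        ≤ finrank k (F i) := by
      rw [hd i]
      exact Submodule.finrank_map_le _ _
    exact (Submodule.eq_of_le_of_finrank_le hle hrank).symm
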